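/- Let L : H → G be bounded linear with 0 < ‖L‖ ≤ 1, let γ > 0, let λ ∈ (0,1), and let A, B be strictly positive operators on G. Then λ(L ⊡_γ A) + (1−λ)(L ⊡_γ B) ≼ L ⊡_γ (λA + (1−λ)B), i.e., the map A ↦ L ⊡_γ A is operator-concave, where L ⊡_γ A = L* ∘ (A⁻¹ + γ(Id_G − L L*))⁻¹ ∘ L. -/

import Mathlib

/-!
For strictly positive `S` and positive `C`, the quadratic form of `(S⁻¹ + C)⁻¹` is a minimum of
functions affine in `S`:
`⟪(S⁻¹ + C)⁻¹ w, w⟫ = min {⟪S y, y⟫ + ⟪C v, v⟫ | y + C v = w}`,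
attained at `v = (S⁻¹ + C)⁻¹ w`, `y = S⁻¹ v`. Evaluating the minimum for `λA + (1 - λ)B` at its
own minimiser and bounding the forms for `A` and `B` by the same pair `(y, v)` shows that
`S ↦ (S⁻¹ + C)⁻¹` is operator concave. Take `C = γ (1 - L L*)`, positive because `‖L‖ ≤ 1`,
and conjugate by `L`.
-/

open ContinuousLinearMap MeasureTheory

noncomputable section

variable {E : Type*} [NormedAddCommGroup E] [InnerProductSpace ℝ E] [CompleteSpace E]
variable {H G : Type*} [NormedAddCommGroup H] [InnerProductSpace ℝ H] [CompleteSpace H]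
  [NormedAddCommGroup G] [InnerProductSpace ℝ G] [CompleteSpace G]

/-- Löwner partial order: `A ≼ B` iff `B - A` is a positive operator. -/
def Loewner (A B : E →L[ℝ] E) : Prop := (B - A).IsPositive

/-- Strictly positive operators: `α • Id ≼ A` for some `α > 0`. -/
def StrictlyPos (A : E →L[ℝ] E) : Prop :=
  IsSelfAdjoint A ∧ ∃ α : ℝ, 0 < α ∧ Loewner (α • (1 : E →L[ℝ] E)) A

/-- Bounded below linear operator. -/
def BoundedBelow (L : H →L[ℝ] G) : Prop := ∃ β : ℝ, 0 < β ∧ ∀ x : H, β * ‖x‖ ≤ ‖L x‖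

/-- Resolvent cocomposition `L ⊡_γ B = L* ∘ (B⁻¹ + γ(Id − L L*))⁻¹ ∘ L`. -/
def rcc (L : H →L[ℝ] G) (γ : ℝ) (B : G →L[ℝ] G) : H →L[ℝ] H :=
  (adjoint L) ∘L (Ring.inverse (Ring.inverse B + γ • ((1 : G →L[ℝ] G) - L ∘L adjoint L))) ∘L L

/-- Resolvent composition `L ⊙_γ B = (L ⊡_{1/γ} B⁻¹)⁻¹`. -/
def rc (L : H →L[ℝ] G) (γ : ℝ) (B : G →L[ℝ] G) : H →L[ℝ] H :=
  Ring.inverse (rcc L (1/γ) (Ring.inverse B))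

/-- Parallel composition `L* ▸ B = (L* ∘ B⁻¹ ∘ L)⁻¹`. -/
def parallelComp (L : H →L[ℝ] G) (B : G →L[ℝ] G) : H →L[ℝ] H :=
  Ring.inverse ((adjoint L) ∘L (Ring.inverse B) ∘L L)

/-- `g(A,B) = inf {λ > 0 : A ≼ λ B}`. -/
def gThomp (A B : E →L[ℝ] E) : ℝ := sInf {l : ℝ | 0 < l ∧ Loewner A (l • B)}

/-- Thompson metric. -/
def dThomp (A B : E →L[ℝ] E) : ℝ := Real.log (max (gThomp A B) (gThomp B A))

/-- The (unique) positive square root of a positive operator. -/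
def opSqrt (A : E →L[ℝ] E) : E →L[ℝ] E :=
  letI := Classical.propDecidable
  if h : ∃ S : E →L[ℝ] E, S.IsPositive ∧ S * S = A then h.choose else 0

/-- Real power `A^t` of a strictly positive operator, `t ∈ (0,1)`, via the
Balakrishnan integral formula `A^t = (sin (π t)/π) ∫₀^∞ s^{t-1} A (A + s)⁻¹ ds`. -/
def opRpow (A : E →L[ℝ] E) (t : ℝ) : E →L[ℝ] E :=
  (Real.sin (Real.pi * t) / Real.pi) •
    ∫ s in Set.Ioi (0 : ℝ), s ^ (t - 1) • (A * Ring.inverse (A + s • (1 : E →L[ℝ] E)))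

/-- Geometric mean `A # B = A^{1/2} (A^{-1/2} B A^{-1/2})^{1/2} A^{1/2}`. -/
def geomMean (A B : E →L[ℝ] E) : E →L[ℝ] E :=
  opSqrt A * opSqrt (Ring.inverse (opSqrt A) * B * Ring.inverse (opSqrt A)) * opSqrt A

/-- `t`-weighted geometric mean `A #_t B = A^{1/2} (A^{-1/2} B A^{-1/2})^t A^{1/2}`. -/
def wGeomMean (t : ℝ) (A B : E →L[ℝ] E) : E →L[ℝ] E :=
  opSqrt A * opRpow (Ring.inverse (opSqrt A) * B * Ring.inverse (opSqrt A)) t * opSqrt A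

open RealInnerProductSpace
open scoped Ring

lemma strictlyPos_iff_coercive {S : E →L[ℝ] E} :
    StrictlyPos S ↔ IsSelfAdjoint S ∧ ∃ α, 0 < α ∧ ∀ x, α * ‖x‖ ^ 2 ≤ ⟪S x, x⟫ := by
  have hinner (α : ℝ) (x : E) :
      ⟪(S - α • (1 : E →L[ℝ] E)) x, x⟫ = ⟪S x, x⟫ - α * ‖x‖ ^ 2 := by
    simp [inner_sub_left, real_inner_smul_left]
  have hsmul (α : ℝ) : IsSelfAdjoint (α • (1 : E →L[ℝ] E)) :=
    (IsSelfAdjoint.all α).smul (IsSelfAdjoint.one _)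
  simp only [StrictlyPos, Loewner, isPositive_iff', hinner, sub_nonneg]
  constructor
  · rintro ⟨hS, α, hα, -, h⟩
    exact ⟨hS, α, hα, h⟩
  · rintro ⟨hS, α, hα, h⟩
    exact ⟨hS, α, hα, hS.sub (hsmul α), h⟩

namespace StrictlyPos

variable {S : E →L[ℝ] E}

lemma isPositive (hS : StrictlyPos S) : S.IsPositive := by
  obtain ⟨hsa, α, hα, h⟩ := strictlyPos_iff_coercive.1 hS
  exact (isPositive_iff' S).2 ⟨hsa, fun x => (by positivity : 0 ≤ α * ‖x‖ ^ 2).trans (h x)⟩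

lemma add_isPositive (hS : StrictlyPos S) {C : E →L[ℝ] E} (hC : C.IsPositive) :
    StrictlyPos (S + C) := by
  obtain ⟨hsa, α, hα, h⟩ := strictlyPos_iff_coercive.1 hS
  refine strictlyPos_iff_coercive.2 ⟨hsa.add hC.isSelfAdjoint, α, hα, fun x => ?_⟩
  rw [add_apply, inner_add_left]
  linarith [h x, hC.inner_nonneg_left x]

lemma smul (hS : StrictlyPos S) {c : ℝ} (hc : 0 < c) : StrictlyPos (c • S) := by
  obtain ⟨hsa, α, hα, h⟩ := strictlyPos_iff_coercive.1 hS
  refine strictlyPos_iff_coercive.2 ⟨(IsSelfAdjoint.all c).smul hsa, c * α, by positivity,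
    fun x => ?_⟩
  rw [smul_apply, real_inner_smul_left, mul_assoc]
  exact mul_le_mul_of_nonneg_left (h x) hc.le

lemma isUnit (hS : StrictlyPos S) : IsUnit S := by
  obtain ⟨-, α, hα, h⟩ := strictlyPos_iff_coercive.1 hS
  have hB : IsCoercive ((innerSL ℝ : E →L[ℝ] E →L[ℝ] ℝ) ∘L S) :=
    ⟨α, hα, fun x => by
      show α * ‖x‖ * ‖x‖ ≤ ⟪S x, x⟫
      simpa only [mul_assoc, sq] using h x⟩
  have hS_eq : (hB.continuousLinearEquivOfBilin : E →L[ℝ] E) = S := by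
    ext x
    exact (hB.unique_continuousLinearEquivOfBilin fun _ => rfl).symm
  exact hS_eq ▸ hB.continuousLinearEquivOfBilin.toUnit.isUnit

lemma apply_ringInverse (hS : StrictlyPos S) (x : E) : S (S⁻¹ʳ x) = x :=
  congr($(Ring.mul_inverse_cancel S hS.isUnit) x)

lemma ringInverse (hS : StrictlyPos S) : StrictlyPos S⁻¹ʳ := by
  obtain ⟨hsa, α, hα, h⟩ := strictlyPos_iff_coercive.1 hS
  refine strictlyPos_iff_coercive.2 ⟨hsa.ringInverse, α / (‖S‖ + 1) ^ 2, by positivity,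
    fun x => ?_⟩
  set u := S⁻¹ʳ x
  have hSu : S u = x := hS.apply_ringInverse x
  have hx : ‖x‖ ≤ (‖S‖ + 1) * ‖u‖ := by
    rw [← hSu]
    exact (S.le_opNorm u).trans (by gcongr; linarith)
  calc α / (‖S‖ + 1) ^ 2 * ‖x‖ ^ 2 ≤ α / (‖S‖ + 1) ^ 2 * ((‖S‖ + 1) * ‖u‖) ^ 2 := by gcongr
    _ = α * ‖u‖ ^ 2 := by field_simp
    _ ≤ ⟪S u, u⟫ := h u
    _ = ⟪u, x⟫ := by rw [hSu, real_inner_comm]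

end StrictlyPos

lemma ContinuousLinearMap.IsPositive.two_mul_inner_le {F : Type*} [NormedAddCommGroup F]
    [InnerProductSpace ℝ F] {T : F →L[ℝ] F} (hT : T.IsPositive) (x y : F) :
    2 * ⟪T x, y⟫ ≤ ⟪T x, x⟫ + ⟪T y, y⟫ := by
  have h := hT.inner_nonneg_left (x - y)
  have hsymm : ⟪T y, x⟫ = ⟪T x, y⟫ := by
    rw [hT.inner_left_eq_inner_right, real_inner_comm]
  simp only [map_sub, inner_sub_left, inner_sub_right, hsymm] at h
  linarith

section InverseInverseAdd

variable {S C : E →L[ℝ] E}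

lemma inner_inverse_inverse_add_le (hS : StrictlyPos S) (hC : C.IsPositive) (y v : E) :
    ⟪(S⁻¹ʳ + C)⁻¹ʳ (y + C v), y + C v⟫ ≤ ⟪S y, y⟫ + ⟪C v, v⟫ := by
  set w := y + C v
  set u := (S⁻¹ʳ + C)⁻¹ʳ w
  have hu : S⁻¹ʳ u + C u = w := (hS.ringInverse.add_isPositive hC).apply_ringInverse w
  have hS_le := hS.isPositive.two_mul_inner_le y (S⁻¹ʳ u)
  have hC_le := hC.two_mul_inner_le v u
  rw [hS.apply_ringInverse, hS.isPositive.inner_left_eq_inner_right, hS.apply_ringInverse,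
    real_inner_comm] at hS_le
  have hw₁ : ⟪u, w⟫ = ⟪u, y⟫ + ⟪C v, u⟫ := by
    rw [inner_add_right, real_inner_comm (C v)]
  have hw₂ : ⟪u, w⟫ = ⟪u, S⁻¹ʳ u⟫ + ⟪C u, u⟫ := by
    rw [← hu, inner_add_right, real_inner_comm u (C u)]
  linarith

lemma exists_inner_inverse_inverse_add_eq (hS : StrictlyPos S) (hC : C.IsPositive) (w : E) :
    ∃ y v, y + C v = w ∧ ⟪(S⁻¹ʳ + C)⁻¹ʳ w, w⟫ = ⟪S y, y⟫ + ⟪C v, v⟫ := by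
  set v := (S⁻¹ʳ + C)⁻¹ʳ w
  have hv : S⁻¹ʳ v + C v = w := (hS.ringInverse.add_isPositive hC).apply_ringInverse w
  refine ⟨S⁻¹ʳ v, v, hv, ?_⟩
  rw [hS.apply_ringInverse, ← hv, inner_add_right, real_inner_comm (C v)]

end InverseInverseAdd

lemma inverse_inverse_add_concave {A B C : E →L[ℝ] E} (hA : StrictlyPos A)
    (hB : StrictlyPos B) (hC : C.IsPositive) {l : ℝ} (hl0 : 0 < l) (hl1 : l < 1) :
    l • (A⁻¹ʳ + C)⁻¹ʳ + (1 - l) • (B⁻¹ʳ + C)⁻¹ʳ ≤ ((l • A + (1 - l) • B)⁻¹ʳ + C)⁻¹ʳ := by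
  have hAB : StrictlyPos (l • A + (1 - l) • B) :=
    (hA.smul hl0).add_isPositive (hB.smul (sub_pos.2 hl1)).isPositive
  have hsa {X : E →L[ℝ] E} (hX : StrictlyPos X) : IsSelfAdjoint (X⁻¹ʳ + C)⁻¹ʳ :=
    (hX.1.ringInverse.add hC.isSelfAdjoint).ringInverse
  rw [le_def, isPositive_iff']
  refine ⟨(hsa hAB).sub (((IsSelfAdjoint.all l).smul (hsa hA)).add
    ((IsSelfAdjoint.all (1 - l)).smul (hsa hB))), fun w => ?_⟩
  obtain ⟨y, v, rfl, hAB_eq⟩ := exists_inner_inverse_inverse_add_eq hAB hC w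
  have hA_le := inner_inverse_inverse_add_le hA hC y v
  have hB_le := inner_inverse_inverse_add_le hB hC y v
  simp only [sub_apply, add_apply, smul_apply, inner_sub_left, inner_add_left,
    real_inner_smul_left] at hAB_eq ⊢
  have hA_le' := mul_le_mul_of_nonneg_left hA_le hl0.le
  have hB_le' := mul_le_mul_of_nonneg_left hB_le (sub_pos.2 hl1).le
  linarith

lemma isPositive_one_sub_comp_adjoint {L : H →L[ℝ] G} (hL : ‖L‖ ≤ 1) :
    (1 - L ∘L adjoint L).IsPositive := by
  refine (isPositive_iff' _).2
    ⟨(IsSelfAdjoint.one _).sub (isPositive_self_comp_adjoint L).isSelfAdjoint, fun x => ?_⟩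
  have hLx : ‖adjoint L x‖ ≤ ‖x‖ :=
    ((adjoint L).le_opNorm x).trans <| by
      rw [adjoint.norm_map]
      exact mul_le_of_le_one_left (norm_nonneg x) hL
  rw [sub_apply, one_apply_eq_self, inner_sub_left, comp_apply, ← adjoint_inner_right,
    real_inner_self_eq_norm_sq, real_inner_self_eq_norm_sq, sub_nonneg]
  gcongr

theorem rcc_concave_general (L : H →L[ℝ] G) (hL1 : ‖L‖ ≤ 1)
    (γ : ℝ) (hγ : 0 < γ) (l : ℝ) (hl0 : 0 < l) (hl1 : l < 1)
    (A B : G →L[ℝ] G) (hA : StrictlyPos A) (hB : StrictlyPos B) :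
    Loewner (l • rcc L γ A + (1 - l) • rcc L γ B)
      (rcc L γ (l • A + (1 - l) • B)) := by
  have hC := (isPositive_one_sub_comp_adjoint hL1).smul_of_nonneg hγ.le
  have h := (inverse_inverse_add_concave hA hB hC hl0 hl1).adjoint_conj L
  simpa only [Loewner, rcc, comp_sub, sub_comp, comp_add, add_comp, comp_smul, smul_comp] using h

theorem rcc_concave (L : H →L[ℝ] G) (hL0 : 0 < ‖L‖) (hL1 : ‖L‖ ≤ 1)
    (γ : ℝ) (hγ : 0 < γ) (l : ℝ) (hl0 : 0 < l) (hl1 : l < 1)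
    (A B : G →L[ℝ] G) (hA : StrictlyPos A) (hB : StrictlyPos B) :
    Loewner (l • rcc L γ A + (1 - l) • rcc L γ B)
      (rcc L γ (l • A + (1 - l) • B)) :=
  rcc_concave_general L hL1 γ hγ l hl0 hl1 A B hA hB

end
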